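/- Let X be a real Banach space with a normalized 1-symmetric basis (e_n), and let r_n = Σ_{k=0}^{2^n − 1} (−1)^k χ_{(k/2^n,(k+1)/2^n)} be the n-th Rademacher function on (0,1). Then ‖r_n‖_{JF_X} = 2^{−n} · ‖Σ_{i=1}^{2^n} e_i‖_X. -/

import Mathlib

/-!
The integral of `r_n` over an interval is bounded by `2⁻ⁿ`, because the primitive of `r_n` is a
triangle wave of height `2⁻ⁿ`, and by the length of the interval. Hence for disjoint intervals
`I_j ⊆ (0,1)` the vector `(2ⁿ |∫_{I_j} r_n|)_j` lies in the capped simplex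
`{c | 0 ≤ c ≤ 1, ∑ c ≤ 2ⁿ}`, whose extreme points are the 0/1 vectors with at most `2ⁿ` ones.
The function `c ↦ ‖∑ c_j e_j‖` is convex, and by 1-symmetry its value at a 0/1 vector with `k`
ones is `‖∑_{i<k} e_i‖ ≤ ‖∑_{i<2ⁿ} e_i‖`. The dyadic intervals attain the bound.
-/

open MeasureTheory

noncomputable section

/-- `e` is a normalized 1-symmetric (Schauder) basis of `X`: each `e n` has norm one,
its linear span is dense, and the norm of finite linear combinations is invariant under
permutations of the indices and changes of signs of the coefficients. -/
def IsSymmetricBasis {X : Type*} [NormedAddCommGroup X] [NormedSpace ℝ X] (e : ℕ → X) : Prop :=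
  (∀ n, ‖e n‖ = 1) ∧
  Dense (Submodule.span ℝ (Set.range e) : Set X) ∧
  ∀ (a : ℕ →₀ ℝ) (π : Equiv.Perm ℕ) (ε : ℕ → ℝ), (∀ n, ε n = 1 ∨ ε n = -1) →
    ‖a.sum fun n c => (ε n * c) • e (π n)‖ = ‖a.sum fun n c => c • e n‖

/-- The `JF_X` norm of an integrable function on `(0,1)`: the supremum of
`‖Σ_j (∫_{I_j} f dμ) e_j‖_X` over all finite families of pairwise disjoint open
subintervals of `(0,1)`. -/
def JFNorm1 {X : Type*} [NormedAddCommGroup X] [NormedSpace ℝ X]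
    (e : ℕ → X) (f : ℝ → ℝ) : ℝ :=
  sSup { r | ∃ (m : ℕ) (a b : Fin m → ℝ),
    (∀ j, 0 ≤ a j ∧ a j < b j ∧ b j ≤ 1) ∧
    (Pairwise fun i j => Disjoint (Set.Ioo (a i) (b i)) (Set.Ioo (a j) (b j))) ∧
    r = ‖∑ j : Fin m, (∫ x in Set.Ioo (a j) (b j), f x) • e (j : ℕ)‖ }

/-- The Rademacher functions `r_n = Σ_{k=0}^{2^n-1} (-1)^k χ_{(k/2^n,(k+1)/2^n)}`. -/
def rademacher (n : ℕ) : ℝ → ℝ := fun x =>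
  ∑ k ∈ Finset.range (2 ^ n),
    (-1 : ℝ) ^ k *
      Set.indicator (Set.Ioo ((k : ℝ) / 2 ^ n) (((k : ℝ) + 1) / 2 ^ n)) (fun _ => (1 : ℝ)) x

open Finset Function

theorem Antitone.sum_range_neg_one_pow_mul_mem_Icc {R : Type*} [Ring R] [PartialOrder R]
    [IsOrderedRing R] {f : ℕ → R} (hf : Antitone f) (hf₀ : ∀ k, 0 ≤ f k) (n : ℕ) :
    ∑ k ∈ range n, (-1) ^ k * f k ∈ Set.Icc 0 (f 0) := by
  induction n generalizing f with
  | zero => simpa using hf₀ 0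
  | succ n ih =>
    obtain ⟨h₀, h₁⟩ := ih (f := fun k ↦ f (k + 1)) (fun a b h ↦ hf (by omega)) (fun k ↦ hf₀ _)
    rw [sum_range_succ']
    simp only [pow_succ, mul_neg_one, neg_mul, sum_neg_distrib, pow_zero, one_mul]
    exact ⟨by simpa using h₁.trans (hf zero_le_one), by simpa using h₀⟩

lemma Real.volume_real_Ioo_inter_Ioo_add {a b : ℝ} (hab : a ≤ b) (p h : ℝ) :
    volume.real (Set.Ioo a b ∩ Set.Ioo p (p + h)) =
      max 0 (min h (b - p)) - max 0 (min h (a - p)) := by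
  rw [Set.Ioo_inter_Ioo, Real.volume_real_Ioo]
  simp only [max_def, min_def]
  split_ifs <;> linarith

lemma sum_sub_le_of_pairwise_disjoint_Ioo {ι : Type*} [Fintype ι] {a b : ι → ℝ} {c d : ℝ}
    (hcd : c ≤ d) (hsub : ∀ j, c ≤ a j ∧ b j ≤ d)
    (hdisj : Pairwise (Disjoint on fun j ↦ Set.Ioo (a j) (b j))) :
    ∑ j, (b j - a j) ≤ d - c := by
  calc ∑ j, (b j - a j) ≤ ∑ j, volume.real (Set.Ioo (a j) (b j)) :=
        sum_le_sum fun j _ ↦ Real.volume_real_Ioo (a := a j) ▸ le_max_left _ _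
    _ = volume.real (⋃ j, Set.Ioo (a j) (b j)) :=
        (measureReal_iUnion_fintype hdisj (fun _ ↦ measurableSet_Ioo)
          fun _ ↦ measure_Ioo_lt_top.ne).symm
    _ ≤ volume.real (Set.Icc c d) :=
        measureReal_mono (Set.iUnion_subset fun j ↦ Set.Ioo_subset_Icc_self.trans
          (Set.Icc_subset_Icc (hsub j).1 (hsub j).2)) measure_Icc_lt_top.ne
    _ = d - c := Real.volume_real_Icc_of_le hcd

theorem mem_convexHull_of_add_smul_of_add_smul {𝕜 E : Type*} [Field 𝕜] [LinearOrder 𝕜]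
    [IsStrictOrderedRing 𝕜] [AddCommGroup E] [Module 𝕜 E] {S : Set E} {x d : E} {s t : 𝕜}
    (hs : 0 < s) (ht : t < 0) (h₁ : x + s • d ∈ convexHull 𝕜 S)
    (h₂ : x + t • d ∈ convexHull 𝕜 S) : x ∈ convexHull 𝕜 S := by
  have hst : s - t ≠ 0 := by linarith
  refine (convex_convexHull 𝕜 S).segment_subset h₁ h₂
    ⟨-t / (s - t), s / (s - t), div_nonneg (by linarith) (by linarith),
      div_nonneg hs.le (by linarith), by field_simp; ring, ?_⟩
  match_scalars <;> field_simp <;> ring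

section CappedSimplex

variable {ι : Type*} [Fintype ι] {N : ℕ} {c : ι → ℝ}

variable (ι) in
def cappedSimplex (N : ℕ) : Set (ι → ℝ) := {c | (∀ i, c i ∈ Set.Icc 0 1) ∧ ∑ i, c i ≤ N}

variable (ι) in
def indicatorsOfCardLE [DecidableEq ι] (N : ℕ) : Set (ι → ℝ) :=
  {v | ∃ s : Finset ι, #s ≤ N ∧ v = fun i ↦ if i ∈ s then 1 else 0}

def fractionalCoords (c : ι → ℝ) : Finset ι := {i | c i ≠ 0 ∧ c i ≠ 1}

lemma mem_fractionalCoords {i : ι} : i ∈ fractionalCoords c ↔ c i ≠ 0 ∧ c i ≠ 1 := by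
  simp [fractionalCoords]

lemma mem_Ioo_of_mem_fractionalCoords (hc : c ∈ cappedSimplex ι N) {i : ι}
    (hi : i ∈ fractionalCoords c) : c i ∈ Set.Ioo 0 1 := by
  rw [mem_fractionalCoords] at hi
  exact ⟨(hc.1 i).1.lt_of_ne' hi.1, (hc.1 i).2.lt_of_ne hi.2⟩

lemma card_fractionalCoords_add_smul_lt {d : ι → ℝ} (hd : ∀ i, d i ≠ 0 → i ∈ fractionalCoords c)
    {t : ℝ} {j : ι} (hj : j ∈ fractionalCoords c)
    (hhit : c j + t * d j = 0 ∨ c j + t * d j = 1) :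
    #(fractionalCoords (c + t • d)) < #(fractionalCoords c) := by
  refine card_lt_card <| (ssubset_iff_of_subset fun i hi ↦ ?_).2 ⟨j, hj, ?_⟩
  · by_cases h : d i = 0
    · simpa [mem_fractionalCoords, h] using hi
    · exact hd i h
  · simp only [mem_fractionalCoords, Pi.add_apply, Pi.smul_apply, smul_eq_mul]
    tauto

lemma eq_ite_of_notMem_fractionalCoords {i : ι} (hi : i ∉ fractionalCoords c) :
    c i = if c i = 1 then 1 else 0 := by
  rw [mem_fractionalCoords] at hi
  split_ifs <;> tauto

lemma mem_indicatorsOfCardLE_of_fractionalCoords_eq_empty [DecidableEq ι]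
    (hc : c ∈ cappedSimplex ι N) (h : fractionalCoords c = ∅) : c ∈ indicatorsOfCardLE ι N := by
  have hbool (i : ι) := eq_ite_of_notMem_fractionalCoords (h ▸ notMem_empty i)
  refine ⟨({i | c i = 1} : Finset ι), ?_, funext fun i ↦ by simpa using hbool i⟩
  have hN := hc.2
  rw [sum_congr rfl fun i _ ↦ hbool i, sum_boole] at hN
  exact_mod_cast hN

-- The coordinates other than `c j` are `0` or `1`, so they sum to an integer `< N`.
lemma sum_add_one_sub_le_of_fractionalCoords_subset {j : ι} (hN : ∑ i, c i ≤ N) (hj : 0 < c j)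
    (hfrac : ∀ i ∈ fractionalCoords c, i = j) : ∑ i, c i + (1 - c j) ≤ N := by
  classical
  have hbool : ∀ i ∈ univ.erase j, c i = if c i = 1 then 1 else 0 := fun i hi ↦
    eq_ite_of_notMem_fractionalCoords fun h ↦ (mem_erase.1 hi).1 (hfrac i h)
  rw [← add_sum_erase _ _ (mem_univ j), sum_congr rfl hbool, sum_boole] at hN ⊢
  set K := #{i ∈ univ.erase j | c i = 1}
  have hKN : K < N := by exact_mod_cast (by linarith : (K : ℝ) < N)
  have : (K : ℝ) + 1 ≤ N := by exact_mod_cast hKN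
  linarith

lemma add_smul_single_mem_cappedSimplex [DecidableEq ι] (hc : c ∈ cappedSimplex ι N) {j : ι}
    {t : ℝ} (ht : c j + t ∈ Set.Icc 0 1) (hsum : ∑ i, c i + t ≤ N) :
    c + t • Pi.single j 1 ∈ cappedSimplex ι N := by
  refine ⟨fun i ↦ ?_, by simpa [sum_add_distrib, Pi.single_apply] using hsum⟩
  by_cases h : i = j
  · simpa [h] using ht
  · simpa [h] using hc.1 i

lemma add_smul_single_sub_single_mem_cappedSimplex [DecidableEq ι] (hc : c ∈ cappedSimplex ι N)
    {j₀ j₁ : ι} (hne : j₀ ≠ j₁) {t : ℝ} (ht₀ : c j₀ + t ∈ Set.Icc 0 1)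
    (ht₁ : c j₁ - t ∈ Set.Icc 0 1) :
    c + t • (Pi.single j₀ 1 - Pi.single j₁ 1) ∈ cappedSimplex ι N := by
  refine ⟨fun i ↦ ?_, by simpa [sum_add_distrib, mul_sub, Pi.single_apply] using hc.2⟩
  by_cases h₀ : i = j₀
  · simpa [h₀, hne] using ht₀
  by_cases h₁ : i = j₁
  · simpa [h₁, hne.symm, sub_eq_add_neg] using ht₁
  simpa [h₀, h₁] using hc.1 i

lemma mem_convexHull_of_sum_add_one_sub_le [DecidableEq ι] (hc : c ∈ cappedSimplex ι N)
    (hfewer : ∀ c' ∈ cappedSimplex ι N, #(fractionalCoords c') < #(fractionalCoords c) →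
      c' ∈ convexHull ℝ (indicatorsOfCardLE ι N)) {j : ι}
    (hj : j ∈ fractionalCoords c) (hslack : ∑ i, c i + (1 - c j) ≤ N) :
    c ∈ convexHull ℝ (indicatorsOfCardLE ι N) := by
  obtain ⟨h0, h1⟩ := mem_Ioo_of_mem_fractionalCoords hc hj
  have hd (i) (hi : (Pi.single j 1 : ι → ℝ) i ≠ 0) : i ∈ fractionalCoords c := by
    rwa [(by simpa [Pi.single_apply] using hi : i = j)]
  refine mem_convexHull_of_add_smul_of_add_smul (by linarith) (neg_neg_of_pos h0)
    (hfewer _ (add_smul_single_mem_cappedSimplex hc (by simp) hslack)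
      (card_fractionalCoords_add_smul_lt hd hj (by simp)))
    (hfewer _ (add_smul_single_mem_cappedSimplex hc (by simp) (by linarith))
      (card_fractionalCoords_add_smul_lt hd hj (by simp)))

lemma mem_convexHull_of_mem_fractionalCoords_of_ne [DecidableEq ι] (hc : c ∈ cappedSimplex ι N)
    (hfewer : ∀ c' ∈ cappedSimplex ι N, #(fractionalCoords c') < #(fractionalCoords c) →
      c' ∈ convexHull ℝ (indicatorsOfCardLE ι N)) {j₀ j₁ : ι}
    (hj₀ : j₀ ∈ fractionalCoords c) (hj₁ : j₁ ∈ fractionalCoords c) (hne : j₀ ≠ j₁) :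
    c ∈ convexHull ℝ (indicatorsOfCardLE ι N) := by
  obtain ⟨h0, h1⟩ := mem_Ioo_of_mem_fractionalCoords hc hj₀
  obtain ⟨h0', h1'⟩ := mem_Ioo_of_mem_fractionalCoords hc hj₁
  have hd (i) (hi : (Pi.single j₀ 1 - Pi.single j₁ 1 : ι → ℝ) i ≠ 0) : i ∈ fractionalCoords c := by
    obtain rfl | rfl : i = j₀ ∨ i = j₁ := by
      by_contra! h
      simp [h.1, h.2] at hi
    exacts [hj₀, hj₁]
  have hmove {t : ℝ} (ht₀ : c j₀ + t ∈ Set.Icc 0 1) (ht₁ : c j₁ - t ∈ Set.Icc 0 1)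
      (hhit : c j₀ + t = 1 ∨ c j₀ + t = 0 ∨ c j₁ - t = 0 ∨ c j₁ - t = 1) :
      c + t • (Pi.single j₀ 1 - Pi.single j₁ 1) ∈ convexHull ℝ (indicatorsOfCardLE ι N) := by
    refine hfewer _ (add_smul_single_sub_single_mem_cappedSimplex hc hne ht₀ ht₁) ?_
    rcases hhit with h | h | h | h
    exacts [card_fractionalCoords_add_smul_lt hd hj₀ (by simp [h, hne]),
      card_fractionalCoords_add_smul_lt hd hj₀ (by simp [h, hne]),
      card_fractionalCoords_add_smul_lt hd hj₁ (by simp [hne.symm, ← sub_eq_add_neg, h]),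
      card_fractionalCoords_add_smul_lt hd hj₁ (by simp [hne.symm, ← sub_eq_add_neg, h])]
  set a := min (1 - c j₀) (c j₁)
  set b := min (c j₀) (1 - c j₁)
  have ha : 0 < a ∧ a ≤ 1 - c j₀ ∧ a ≤ c j₁ :=
    ⟨lt_min (by linarith) h0', min_le_left _ _, min_le_right _ _⟩
  have hb : 0 < b ∧ b ≤ c j₀ ∧ b ≤ 1 - c j₁ :=
    ⟨lt_min h0 (by linarith), min_le_left _ _, min_le_right _ _⟩
  refine mem_convexHull_of_add_smul_of_add_smul ha.1 (neg_neg_of_pos hb.1)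
    (hmove ⟨by linarith, by linarith⟩ ⟨by linarith, by linarith⟩ ?_)
    (hmove ⟨by linarith, by linarith⟩ ⟨by linarith, by linarith⟩ ?_)
  · rcases min_choice (1 - c j₀) (c j₁) with h | h <;> simp only [a, h] <;> ring_nf <;> simp
  · rcases min_choice (c j₀) (1 - c j₁) with h | h <;> simp only [b, h] <;> ring_nf <;> simp

/- Induction on the number of fractional coordinates: moving `c` both ways along `Pi.single j 1`
(if the sum has slack) or along `Pi.single j₀ 1 - Pi.single j₁ 1` until some coordinate reaches
`0` or `1` writes `c` as a convex combination of two points with fewer fractional coordinates. -/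
theorem cappedSimplex_subset_convexHull [DecidableEq ι] :
    cappedSimplex ι N ⊆ convexHull ℝ (indicatorsOfCardLE ι N) := by
  intro c hc
  induction hk : #(fractionalCoords c) using Nat.strong_induction_on generalizing c with
  | _ k ih =>
  replace ih : ∀ c' ∈ cappedSimplex ι N, #(fractionalCoords c') < #(fractionalCoords c) →
      c' ∈ convexHull ℝ (indicatorsOfCardLE ι N) := fun c' hc' hlt ↦ ih _ (hk ▸ hlt) hc' rfl
  obtain hempty | ⟨j₀, hj₀⟩ := (fractionalCoords c).eq_empty_or_nonempty
  · exact subset_convexHull ℝ _ (mem_indicatorsOfCardLE_of_fractionalCoords_eq_empty hc hempty)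
  by_cases hslack : ∑ i, c i + (1 - c j₀) ≤ N
  · exact mem_convexHull_of_sum_add_one_sub_le hc ih hj₀ hslack
  obtain ⟨j₁, hj₁, hne⟩ : ∃ j₁ ∈ fractionalCoords c, j₁ ≠ j₀ := by
    by_contra! h
    exact hslack (sum_add_one_sub_le_of_fractionalCoords_subset hc.2
      (mem_Ioo_of_mem_fractionalCoords hc hj₀).1 h)
  exact mem_convexHull_of_mem_fractionalCoords_of_ne hc ih hj₀ hj₁ hne.symm

end CappedSimplex

namespace IsSymmetricBasis

variable {X : Type*} [NormedAddCommGroup X] [NormedSpace ℝ X] {e : ℕ → X}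

theorem norm_sum_sign_mul_smul_perm (he : IsSymmetricBasis e) {ι : Type*} (s : Finset ι)
    {σ : ι → ℕ} (hσ : Injective σ) (c ε : ι → ℝ) (hε : ∀ i, ε i = 1 ∨ ε i = -1)
    (π : Equiv.Perm ℕ) :
    ‖∑ i ∈ s, (ε i * c i) • e (π (σ i))‖ = ‖∑ i ∈ s, c i • e (σ i)‖ := by
  classical
  let a : ℕ →₀ ℝ := ∑ i ∈ s, Finsupp.single (σ i) (c i)
  let ε' : ℕ → ℝ := extend σ ε 1
  have hε' (n : ℕ) : ε' n = 1 ∨ ε' n = -1 := by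
    by_cases hn : ∃ i, σ i = n
    · obtain ⟨i, rfl⟩ := hn
      simpa [ε', hσ.extend_apply] using hε i
    · simp [ε', extend_apply' _ _ _ hn]
  have hsum (d : ℕ → ℝ) (f : ℕ → X) :
      a.sum (fun n x ↦ (d n * x) • f n) = ∑ i ∈ s, (d (σ i) * c i) • f (σ i) := by
    rw [← Finsupp.sum_finsetSum_index (by simp) fun _ _ _ ↦ by rw [mul_add, add_smul]]
    exact sum_congr rfl fun i _ ↦ Finsupp.sum_single_index (by simp)
  have h := he.2.2 a π ε' hε'
  have h₁ := hsum ε' (fun n ↦ e (π n))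
  have h₂ := hsum 1 e
  simp only [Pi.one_apply, one_mul] at h₁ h₂
  rw [h₁, h₂] at h
  simpa only [ε', hσ.extend_apply] using h

theorem norm_sum_abs_smul (he : IsSymmetricBasis e) {ι : Type*} (s : Finset ι) {σ : ι → ℕ}
    (hσ : Injective σ) (c : ι → ℝ) :
    ‖∑ i ∈ s, |c i| • e (σ i)‖ = ‖∑ i ∈ s, c i • e (σ i)‖ := by
  have := he.norm_sum_sign_mul_smul_perm s hσ c (fun i ↦ if c i < 0 then -1 else 1)
    (fun i ↦ by split_ifs <;> simp) 1
  rw [← this]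
  congr! 3 with i
  split_ifs with h
  · rw [abs_of_neg h, neg_one_mul]
  · rw [abs_of_nonneg (not_lt.1 h), one_mul]

theorem norm_sum_comp_perm (he : IsSymmetricBasis e) (s : Finset ℕ) (π : Equiv.Perm ℕ) :
    ‖∑ n ∈ s, e (π n)‖ = ‖∑ n ∈ s, e n‖ := by
  simpa using he.norm_sum_sign_mul_smul_perm s injective_id 1 1 (fun _ ↦ Or.inl rfl) π

theorem norm_sum_le_of_subset (he : IsSymmetricBasis e) {s t : Finset ℕ} (hst : s ⊆ t) :
    ‖∑ n ∈ s, e n‖ ≤ ‖∑ n ∈ t, e n‖ := by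
  classical
  let ε : ℕ → ℝ := fun n ↦ if n ∈ s then 1 else -1
  have hflip : ‖∑ n ∈ t, ε n • e n‖ = ‖∑ n ∈ t, e n‖ := by
    simpa using he.norm_sum_sign_mul_smul_perm t injective_id 1 ε
      (fun n ↦ by unfold ε; split_ifs <;> simp) 1
  have hsum : ∑ n ∈ t, e n + ∑ n ∈ t, ε n • e n = (2 : ℝ) • ∑ n ∈ s, e n := by
    rw [← sum_add_distrib, smul_sum, ← sum_subset hst fun n _ hn ↦ by simp [ε, hn]]
    exact sum_congr rfl fun n hn ↦ by simp [ε, hn, two_smul]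
  have := norm_add_le (∑ n ∈ t, e n) (∑ n ∈ t, ε n • e n)
  rw [hsum, hflip, norm_smul] at this
  norm_num at this
  linarith

theorem norm_sum_le_norm_sum_range (he : IsSymmetricBasis e) {s : Finset ℕ} {N : ℕ}
    (hs : #s ≤ N) : ‖∑ n ∈ s, e n‖ ≤ ‖∑ n ∈ range N, e n‖ := by
  obtain ⟨π, hπ⟩ := Equiv.Perm.exists_map_finset_eq s (range #s) (card_range _).symm
  calc ‖∑ n ∈ s, e n‖ = ‖∑ n ∈ s, e (π n)‖ := (he.norm_sum_comp_perm s π).symm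
    _ = ‖∑ n ∈ range #s, e n‖ := by rw [← hπ, sum_map]; rfl
    _ ≤ ‖∑ n ∈ range N, e n‖ := he.norm_sum_le_of_subset (range_subset_range.2 hs)

theorem norm_sum_smul_le (he : IsSymmetricBasis e) {ι : Type*} [Fintype ι] {σ : ι → ℕ}
    (hσ : Injective σ) {N : ℕ} {t : ℝ} (ht : 0 < t) {c : ι → ℝ} (hc : ∀ i, |c i| ≤ t)
    (hsum : ∑ i, |c i| ≤ N * t) : ‖∑ i, c i • e (σ i)‖ ≤ t * ‖∑ n ∈ range N, e n‖ := by
  classical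
  let d : ι → ℝ := fun i ↦ |c i| / t
  have hd : d ∈ cappedSimplex ι N := ⟨fun i ↦ ⟨by positivity, (div_le_one ht).2 (hc i)⟩,
    by rw [← sum_div, div_le_iff₀ ht]; exact hsum⟩
  obtain ⟨v, ⟨s, hs, rfl⟩, hv⟩ :=
    ((convexOn_norm convex_univ).comp_linearMap (Fintype.linearCombination ℝ (e ∘ σ))
      ).exists_ge_of_mem_convexHull (Set.subset_univ _) (cappedSimplex_subset_convexHull hd)
  simp only [comp_apply, Fintype.linearCombination_apply] at hv
  calc ‖∑ i, c i • e (σ i)‖ = ‖∑ i, |c i| • e (σ i)‖ := (he.norm_sum_abs_smul _ hσ c).symm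
    _ = t * ‖∑ i, d i • e (σ i)‖ := by
      rw [← abs_of_pos ht, ← Real.norm_eq_abs, ← norm_smul, smul_sum]
      simp [d, smul_smul, mul_div_cancel₀ _ ht.ne']
    _ ≤ t * ‖∑ n ∈ s.map ⟨σ, hσ⟩, e n‖ := by
      gcongr
      simpa [sum_map, ite_smul] using hv
    _ ≤ t * ‖∑ n ∈ range N, e n‖ := by
      gcongr
      exact he.norm_sum_le_norm_sum_range (by simpa using hs)

end IsSymmetricBasis

def dyadicInterval (n k : ℕ) : Set ℝ := Set.Ioo ((k : ℝ) / 2 ^ n) (((k : ℝ) + 1) / 2 ^ n)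

namespace dyadicInterval

lemma disjoint_of_lt {n j k : ℕ} (hjk : j < k) :
    Disjoint (dyadicInterval n j) (dyadicInterval n k) := by
  refine (Set.Ioc_disjoint_Ioc_of_le ?_).mono Set.Ioo_subset_Ioc_self Set.Ioo_subset_Ioc_self
  gcongr
  exact_mod_cast hjk

lemma pairwise_disjoint (n : ℕ) : Pairwise (Disjoint on dyadicInterval n) := by
  intro j k hjk
  rcases hjk.lt_or_gt with h | h
  · exact disjoint_of_lt h
  · exact (disjoint_of_lt h).symm

end dyadicInterval

lemma rademacher_eq_sum (n : ℕ) (x : ℝ) :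
    rademacher n x = ∑ k ∈ range (2 ^ n), (-1) ^ k * (dyadicInterval n k).indicator 1 x := rfl

lemma rademacher_eq_neg_one_pow {n k : ℕ} (hk : k < 2 ^ n) {x : ℝ} (hx : x ∈ dyadicInterval n k) :
    rademacher n x = (-1) ^ k := by
  rw [rademacher_eq_sum, sum_eq_single_of_mem k (mem_range.2 hk)]
  · simp [hx]
  · intro j _ hjk
    simp [Set.indicator_of_notMem ((dyadicInterval.pairwise_disjoint n hjk).notMem_of_mem_right hx)]

lemma abs_rademacher_le_one (n : ℕ) (x : ℝ) : |rademacher n x| ≤ 1 := by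
  by_cases hx : ∃ k < 2 ^ n, x ∈ dyadicInterval n k
  · obtain ⟨k, hk, hxk⟩ := hx
    simp [rademacher_eq_neg_one_pow hk hxk]
  · push Not at hx
    rw [rademacher_eq_sum, sum_eq_zero fun k hk ↦ by simp [hx k (mem_range.1 hk)]]
    simp

lemma setIntegral_rademacher_dyadicInterval {n k : ℕ} (hk : k < 2 ^ n) :
    ∫ x in dyadicInterval n k, rademacher n x = (-1) ^ k * ((2 : ℝ) ^ n)⁻¹ := by
  have hmeas : MeasurableSet (dyadicInterval n k) := measurableSet_Ioo
  rw [setIntegral_congr_fun hmeas fun x hx ↦ rademacher_eq_neg_one_pow hk hx,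
    setIntegral_const, dyadicInterval, Real.volume_real_Ioo_of_le (by gcongr; linarith)]
  simp only [smul_eq_mul]
  ring

lemma abs_setIntegral_rademacher_le_sub (n : ℕ) {a b : ℝ} (hab : a ≤ b) :
    |∫ x in Set.Ioo a b, rademacher n x| ≤ b - a := by
  have := norm_setIntegral_le_of_norm_le_const (μ := volume) (s := Set.Ioo a b)
    measure_Ioo_lt_top fun x _ ↦ (Real.norm_eq_abs _).trans_le (abs_rademacher_le_one n x)
  rwa [Real.norm_eq_abs, one_mul, Real.volume_real_Ioo_of_le hab] at this

-- `∫ t in Set.Iio x, rademacher n t`: a triangle wave of height `2⁻ⁿ`.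
def rademacherPrimitive (n : ℕ) (x : ℝ) : ℝ :=
  ∑ k ∈ range (2 ^ n), (-1) ^ k * max 0 (min ((2 : ℝ) ^ n)⁻¹ (x - k / 2 ^ n))

lemma rademacherPrimitive_mem_Icc (n : ℕ) (x : ℝ) :
    rademacherPrimitive n x ∈ Set.Icc 0 ((2 : ℝ) ^ n)⁻¹ := by
  have hanti : Antitone fun k : ℕ ↦ max 0 (min ((2 : ℝ) ^ n)⁻¹ (x - k / 2 ^ n)) := by
    intro k l hkl
    dsimp only
    gcongr
  obtain ⟨h₀, h₁⟩ := hanti.sum_range_neg_one_pow_mul_mem_Icc (fun k ↦ le_max_left _ _) (2 ^ n)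
  exact ⟨h₀, h₁.trans (max_le (by positivity) (min_le_left _ _))⟩

lemma setIntegral_rademacher {n : ℕ} {a b : ℝ} (hab : a ≤ b) :
    ∫ x in Set.Ioo a b, rademacher n x = rademacherPrimitive n b - rademacherPrimitive n a := by
  have hmeas (k : ℕ) : MeasurableSet (dyadicInterval n k) := measurableSet_Ioo
  have hint (k : ℕ) : IntegrableOn ((dyadicInterval n k).indicator 1) (Set.Ioo a b) :=
    (integrableOn_const (C := (1 : ℝ)) measure_Ioo_lt_top.ne).indicator (hmeas k)
  simp_rw [rademacher_eq_sum]
  rw [integral_finsetSum _ fun k _ ↦ (hint k).const_mul _, rademacherPrimitive,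
    rademacherPrimitive, ← sum_sub_distrib]
  refine sum_congr rfl fun k _ ↦ ?_
  rw [integral_const_mul, ← mul_sub, setIntegral_indicator (hmeas k), Pi.one_def,
    setIntegral_const, smul_eq_mul, mul_one, dyadicInterval, add_div, one_div,
    Real.volume_real_Ioo_inter_Ioo_add hab]

lemma abs_setIntegral_rademacher_le (n : ℕ) {a b : ℝ} (hab : a ≤ b) :
    |∫ x in Set.Ioo a b, rademacher n x| ≤ ((2 : ℝ) ^ n)⁻¹ := by
  obtain ⟨ha₀, ha₁⟩ := rademacherPrimitive_mem_Icc n a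
  obtain ⟨hb₀, hb₁⟩ := rademacherPrimitive_mem_Icc n b
  rw [setIntegral_rademacher hab, abs_sub_le_iff]
  constructor <;> linarith

namespace IsSymmetricBasis

variable {X : Type*} [NormedAddCommGroup X] [NormedSpace ℝ X] {e : ℕ → X}

theorem norm_sum_setIntegral_rademacher_le (he : IsSymmetricBasis e) (n : ℕ) {m : ℕ}
    {a b : Fin m → ℝ} (hab : ∀ j, 0 ≤ a j ∧ a j < b j ∧ b j ≤ 1)
    (hdisj : Pairwise (Disjoint on fun j ↦ Set.Ioo (a j) (b j))) :
    ‖∑ j, (∫ x in Set.Ioo (a j) (b j), rademacher n x) • e j‖ ≤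
      ((2 : ℝ) ^ n)⁻¹ * ‖∑ i ∈ range (2 ^ n), e i‖ := by
  refine he.norm_sum_smul_le Fin.val_injective (by positivity)
    (fun j ↦ abs_setIntegral_rademacher_le n (hab j).2.1.le) ?_
  calc ∑ j, |∫ x in Set.Ioo (a j) (b j), rademacher n x| ≤ ∑ j, (b j - a j) :=
        sum_le_sum fun j _ ↦ abs_setIntegral_rademacher_le_sub n (hab j).2.1.le
    _ ≤ 1 - 0 := sum_sub_le_of_pairwise_disjoint_Ioo zero_le_one
        (fun j ↦ ⟨(hab j).1, (hab j).2.2⟩) hdisj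
    _ = ((2 ^ n : ℕ) : ℝ) * ((2 : ℝ) ^ n)⁻¹ := by simp

theorem norm_sum_setIntegral_rademacher_dyadicInterval (he : IsSymmetricBasis e) (n : ℕ) :
    ‖∑ j : Fin (2 ^ n), (∫ x in dyadicInterval n j, rademacher n x) • e j‖ =
      ((2 : ℝ) ^ n)⁻¹ * ‖∑ i ∈ range (2 ^ n), e i‖ := by
  have hint (j : Fin (2 ^ n)) : ∫ x in dyadicInterval n j, rademacher n x =
      (-1) ^ (j : ℕ) * ((2 : ℝ) ^ n)⁻¹ := setIntegral_rademacher_dyadicInterval j.isLt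
  rw [← he.norm_sum_abs_smul _ Fin.val_injective]
  simp only [hint, abs_mul, abs_pow, abs_neg, abs_one, one_pow, one_mul]
  rw [← smul_sum, norm_smul, Real.norm_eq_abs, abs_abs, abs_of_pos (by positivity),
    Fin.sum_univ_eq_sum_range (fun i ↦ e i)]

end IsSymmetricBasis

/-- For the `n`-th Rademacher function `r_n`,
`‖r_n‖_{JF_X} = 2^{-n} ‖Σ_{i=1}^{2^n} e_i‖_X`. -/
theorem JFX_norm_rademacher
    {X : Type*} [NormedAddCommGroup X] [NormedSpace ℝ X]
    (e : ℕ → X) (he : IsSymmetricBasis e) (n : ℕ) :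
    JFNorm1 e (rademacher n) = ((2 : ℝ) ^ n)⁻¹ * ‖∑ i ∈ Finset.range (2 ^ n), e i‖ := by
  have hdyadic (j : Fin (2 ^ n)) : 0 ≤ ((j : ℕ) : ℝ) / 2 ^ n ∧
      ((j : ℕ) : ℝ) / 2 ^ n < (((j : ℕ) : ℝ) + 1) / 2 ^ n ∧ (((j : ℕ) : ℝ) + 1) / 2 ^ n ≤ 1 := by
    refine ⟨by positivity, by gcongr; exact lt_add_one _, ?_⟩
    rw [div_le_one (by positivity)]
    exact_mod_cast j.isLt
  refine IsGreatest.csSup_eq ⟨⟨2 ^ n, _, _, hdyadic,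
    (dyadicInterval.pairwise_disjoint n).comp_of_injective Fin.val_injective,
    (he.norm_sum_setIntegral_rademacher_dyadicInterval n).symm⟩, ?_⟩
  rintro r ⟨m, a, b, hab, hdisj, rfl⟩
  exact he.norm_sum_setIntegral_rademacher_le n hab hdisj
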